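/- Let C be a subgroup of G = Z2^{k1} × Z4^{k2} × Q8^{k3} whose Gray image Φ(C) is a Hadamard binary code of length n = k1 + 2k2 + 4k3 > 4 (every nonidentity element of C has Gray image of weight n/2 or n). If a, b, c ∈ C all have order 4, b^2 = c^2 = [b, c], and [a, b] = [a, c] = e, then (ab)^2 = (ac)^2 = u and none of a^2, b^2, c^2 equals u, where u is the unique element of G whose Gray image is the all-ones vector. -/

import Mathlib

/-- The group G = Z2^{k1} × Z4^{k2} × Q8^{k3}. -/
abbrev Gq (k1 k2 k3 : ℕ) : Type :=
  (Fin k1 → Multiplicative (ZMod 2)) × (Fin k2 → Multiplicative (ZMod 4)) ×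
    (Fin k3 → QuaternionGroup 2)

/-- The Gray map Φ : Q8 → Z2⁴ : 1 ↦ 0000, a ↦ 0101, a² ↦ 1111, a³ ↦ 1010,
b ↦ 0110, a³b ↦ 0011, a²b ↦ 1001, ab ↦ 1100 (here b = xa 0, so ab = xa 3, etc.). -/
def grayQ8 : QuaternionGroup 2 → Fin 4 → ZMod 2
  | QuaternionGroup.a i =>
      if i = 0 then ![0, 0, 0, 0] else if i = 1 then ![0, 1, 0, 1]
      else if i = 2 then ![1, 1, 1, 1] else ![1, 0, 1, 0]
  | QuaternionGroup.xa i =>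
      if i = 0 then ![0, 1, 1, 0] else if i = 1 then ![0, 0, 1, 1]
      else if i = 2 then ![1, 0, 0, 1] else ![1, 1, 0, 0]

/-- The Gray map φ : Z4 → Z2² : 0 ↦ 00, 1 ↦ 01, 2 ↦ 11, 3 ↦ 10. -/
def grayZ4 : ZMod 4 → Fin 2 → ZMod 2 := fun x =>
  if x = 0 then ![0, 0] else if x = 1 then ![0, 1] else if x = 2 then ![1, 1] else ![1, 0]

/-- The componentwise Gray map on G = Z2^{k1} × Z4^{k2} × Q8^{k3}. -/
def grayG {k1 k2 k3 : ℕ} (x : Gq k1 k2 k3) :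
    (Fin k1 → ZMod 2) × (Fin k2 → Fin 2 → ZMod 2) × (Fin k3 → Fin 4 → ZMod 2) :=
  (fun i => Multiplicative.toAdd (x.1 i),
   fun j => grayZ4 (Multiplicative.toAdd (x.2.1 j)),
   fun j => grayQ8 (x.2.2 j))

/-- Hamming weight of the Gray image of an element of G. -/
def wtG {k1 k2 k3 : ℕ} (x : Gq k1 k2 k3) : ℕ :=
  (Finset.univ.filter fun i => (grayG x).1 i ≠ 0).card
    + ∑ j : Fin k2, (Finset.univ.filter fun b => (grayG x).2.1 j b ≠ 0).card
    + ∑ j : Fin k3, (Finset.univ.filter fun b => (grayG x).2.2 j b ≠ 0).card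

/-- The element u of G whose Gray image is the all-ones vector. -/
def uG (k1 k2 k3 : ℕ) : Gq k1 k2 k3 :=
  (fun _ => Multiplicative.ofAdd (1 : ZMod 2),
   fun _ => Multiplicative.ofAdd (2 : ZMod 4),
   fun _ => QuaternionGroup.a 2)

open scoped commutatorElement

/-!
In every coordinate the hypotheses force `aⱼ² = 1` or `bⱼ² = 1`: in a `ℤ₂` or `ℤ₄` coordinate
`bⱼ² = ⁅bⱼ, cⱼ⁆ = 1`, and in a `Q₈` coordinate with `bⱼ² ≠ 1` the elements `bⱼ, cⱼ` do not commute,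
hence generate `Q₈`, so `aⱼ` is central and `aⱼ² = 1`. Thus `(ab)² = a²b²` with `a²` and `b²`
supported on disjoint blocks, so `wt((ab)²) = wt(a²) + wt(b²)`. All three weights lie in
`{n/2, n}`, which forces `wt(a²) = wt(b²) = n/2` and `wt((ab)²) = n`, and `u` is the only element
of weight `n`.
-/

theorem hammingNorm_eq_card_fintype_iff {ι : Type*} [Fintype ι] {β : ι → Type*}
    [∀ i, DecidableEq (β i)] [∀ i, Zero (β i)] {x : ∀ i, β i} :
    hammingNorm x = Fintype.card ι ↔ ∀ i, x i ≠ 0 := by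
  simpa [hammingNorm] using Finset.card_filter_eq_iff (s := Finset.univ) (p := fun i => x i ≠ 0)

section BlockWeight

variable {H ι : Type*} [Fintype ι] {m : ℕ} (g : H → Fin m → ZMod 2)

theorem sum_hammingNorm_mul_of_eq_one_or_eq_one [MulOneClass H] (hg : g 1 = 0) {x y : ι → H}
    (h : ∀ i, x i = 1 ∨ y i = 1) :
    ∑ i, hammingNorm (g (x i * y i)) = ∑ i, hammingNorm (g (x i)) + ∑ i, hammingNorm (g (y i)) := by
  rw [← Finset.sum_add_distrib]
  refine Finset.sum_congr rfl fun i _ => ?_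
  rcases h i with h | h <;> simp [h, hg]

theorem sum_hammingNorm_le (x : ι → H) : ∑ i, hammingNorm (g (x i)) ≤ Fintype.card ι * m := by
  simpa using Finset.sum_le_card_nsmul Finset.univ (fun i => hammingNorm (g (x i))) m
    fun _ _ => hammingNorm_le_card_fintype.trans_eq (Fintype.card_fin m)

theorem eq_of_sum_hammingNorm_eq {u : H} (hu : ∀ z, (∀ b, g z b ≠ 0) → z = u) {x : ι → H}
    (h : ∑ i, hammingNorm (g (x i)) = Fintype.card ι * m) (i : ι) : x i = u := by
  have hle : ∀ i ∈ Finset.univ, hammingNorm (g (x i)) ≤ m :=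
    fun _ _ => hammingNorm_le_card_fintype.trans_eq (Fintype.card_fin m)
  have hmax := (Finset.sum_eq_sum_iff_of_le hle).mp (by simpa using h) i (Finset.mem_univ i)
  exact hu _ (hammingNorm_eq_card_fintype_iff.mp (hmax.trans (Fintype.card_fin m).symm))

end BlockWeight

def grayZ2 (z : ZMod 2) : Fin 1 → ZMod 2 := ![z]

theorem grayZ2_zero : grayZ2 0 = 0 := by decide

theorem grayZ4_zero : grayZ4 0 = 0 := by decide

theorem grayQ8_one : grayQ8 1 = 0 := by decide

theorem forall_grayZ2_ne_zero_iff (z : ZMod 2) : (∀ i, grayZ2 z i ≠ 0) ↔ z = 1 := by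
  revert z; decide

theorem forall_grayZ4_ne_zero_iff (z : ZMod 4) : (∀ i, grayZ4 z i ≠ 0) ↔ z = 2 := by
  revert z; decide

theorem forall_grayQ8_ne_zero_iff (q : QuaternionGroup 2) :
    (∀ i, grayQ8 q i ≠ 0) ↔ q = QuaternionGroup.a 2 := by
  revert q; decide

theorem QuaternionGroup.sq_eq_one_or_sq_eq_one {A B C : QuaternionGroup 2} (hB : B ^ 2 = ⁅B, C⁆)
    (hAB : ⁅A, B⁆ = 1) (hAC : ⁅A, C⁆ = 1) : A ^ 2 = 1 ∨ B ^ 2 = 1 := by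
  revert A B C; decide

theorem sq_eq_one_of_sq_eq_commutatorElement {H : Type*} [CommGroup H] {B C : H}
    (hB : B ^ 2 = ⁅B, C⁆) : B ^ 2 = 1 := by
  rwa [commutatorElement_eq_one_iff_commute.mpr (Commute.all B C)] at hB

section Gq

variable {k1 k2 k3 : ℕ}

theorem wtG_eq (x : Gq k1 k2 k3) :
    wtG x = ∑ i, hammingNorm (grayZ2 (Multiplicative.toAdd (x.1 i)))
      + ∑ j, hammingNorm (grayZ4 (Multiplicative.toAdd (x.2.1 j)))
      + ∑ j, hammingNorm (grayQ8 (x.2.2 j)) := by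
  rw [wtG, Finset.card_filter]
  congr 2
  refine Finset.sum_congr rfl fun i _ => ?_
  by_cases h : Multiplicative.toAdd (x.1 i) = 0 <;> simp [grayG, grayZ2, hammingNorm, h]

theorem wtG_one : wtG (1 : Gq k1 k2 k3) = 0 := by
  simp [wtG_eq, grayZ2_zero, grayZ4_zero, grayQ8_one]

theorem wtG_uG : wtG (uG k1 k2 k3) = k1 + 2 * k2 + 4 * k3 := by
  have h2 : hammingNorm (grayZ2 1) = 1 := by decide
  have h4 : hammingNorm (grayZ4 2) = 2 := by decide
  have h8 : hammingNorm (grayQ8 (QuaternionGroup.a 2)) = 4 := by decide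
  simp [wtG_eq, uG, h2, h4, h8, mul_comm]

theorem eq_uG_of_wtG_eq {x : Gq k1 k2 k3} (h : wtG x = k1 + 2 * k2 + 4 * k3) :
    x = uG k1 k2 k3 := by
  have le2 := sum_hammingNorm_le (fun z => grayZ2 (Multiplicative.toAdd z)) x.1
  have le4 := sum_hammingNorm_le (fun z => grayZ4 (Multiplicative.toAdd z)) x.2.1
  have le8 := sum_hammingNorm_le grayQ8 x.2.2
  simp only [Fintype.card_fin] at le2 le4 le8
  rw [wtG_eq] at h
  refine Prod.ext (funext fun i => ?_) (Prod.ext (funext fun j => ?_) (funext fun j => ?_))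
  · refine eq_of_sum_hammingNorm_eq (fun z => grayZ2 (Multiplicative.toAdd z)) (fun z hz => ?_)
      (by simp only [Fintype.card_fin]; omega) i
    exact congrArg Multiplicative.ofAdd ((forall_grayZ2_ne_zero_iff _).mp hz)
  · refine eq_of_sum_hammingNorm_eq (fun z => grayZ4 (Multiplicative.toAdd z)) (fun z hz => ?_)
      (by simp only [Fintype.card_fin]; omega) j
    exact congrArg Multiplicative.ofAdd ((forall_grayZ4_ne_zero_iff _).mp hz)
  · exact eq_of_sum_hammingNorm_eq grayQ8 (fun z hz => (forall_grayQ8_ne_zero_iff z).mp hz)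
      (by simp only [Fintype.card_fin]; omega) j

def BlockDisjoint (x y : Gq k1 k2 k3) : Prop :=
  (∀ i, x.1 i = 1 ∨ y.1 i = 1) ∧ (∀ j, x.2.1 j = 1 ∨ y.2.1 j = 1) ∧
    (∀ j, x.2.2 j = 1 ∨ y.2.2 j = 1)

theorem wtG_mul_of_blockDisjoint {x y : Gq k1 k2 k3} (h : BlockDisjoint x y) :
    wtG (x * y) = wtG x + wtG y := by
  obtain ⟨h2, h4, h8⟩ := h
  have s2 := sum_hammingNorm_mul_of_eq_one_or_eq_one
    (fun z => grayZ2 (Multiplicative.toAdd z)) grayZ2_zero h2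
  have s4 := sum_hammingNorm_mul_of_eq_one_or_eq_one
    (fun z => grayZ4 (Multiplicative.toAdd z)) grayZ4_zero h4
  have s8 := sum_hammingNorm_mul_of_eq_one_or_eq_one grayQ8 grayQ8_one h8
  simp only [wtG_eq, Prod.fst_mul, Prod.snd_mul, Pi.mul_apply] at s2 s4 s8 ⊢
  omega

theorem blockDisjoint_sq_sq {a b c : Gq k1 k2 k3} (hbc : b ^ 2 = ⁅b, c⁆) (hab : ⁅a, b⁆ = 1)
    (hac : ⁅a, c⁆ = 1) : BlockDisjoint (a ^ 2) (b ^ 2) :=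
  ⟨fun i => Or.inr (sq_eq_one_of_sq_eq_commutatorElement (congrFun (congrArg Prod.fst hbc) i)),
    fun j => Or.inr (sq_eq_one_of_sq_eq_commutatorElement
      (congrFun (congrArg (·.2.1) hbc) j)),
    fun j => QuaternionGroup.sq_eq_one_or_sq_eq_one (congrFun (congrArg (·.2.2) hbc) j)
      (congrFun (congrArg (·.2.2) hab) j) (congrFun (congrArg (·.2.2) hac) j)⟩

theorem ne_uG_of_two_mul_wtG_eq {x : Gq k1 k2 k3} (hn : 0 < k1 + 2 * k2 + 4 * k3)
    (h : 2 * wtG x = k1 + 2 * k2 + 4 * k3) : x ≠ uG k1 k2 k3 := by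
  rintro rfl
  rw [wtG_uG] at h
  omega

theorem wtG_eq_of_wtG_mul_eq_add {C : Subgroup (Gq k1 k2 k3)} {n : ℕ} (hn : 0 < n)
    (hHad : ∀ x ∈ C, x ≠ 1 → 2 * wtG x = n ∨ wtG x = n) {x y : Gq k1 k2 k3}
    (hx : x ∈ C) (hy : y ∈ C) (hx1 : x ≠ 1) (hy1 : y ≠ 1) (h : wtG (x * y) = wtG x + wtG y) :
    wtG (x * y) = n ∧ 2 * wtG x = n ∧ 2 * wtG y = n := by
  have hwx := hHad x hx hx1
  have hwy := hHad y hy hy1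
  have hxy1 : x * y ≠ 1 := by
    intro hxy
    rw [hxy, wtG_one] at h
    omega
  have hwxy := hHad _ (mul_mem hx hy) hxy1
  omega

end Gq

theorem stmt_18_general (k1 k2 k3 : ℕ) (C : Subgroup (Gq k1 k2 k3))
    (n : ℕ) (hn : n = k1 + 2 * k2 + 4 * k3) (hn4 : 4 < n)
    (hHad : ∀ x ∈ C, x ≠ 1 → 2 * wtG x = n ∨ wtG x = n)
    (a b c : Gq k1 k2 k3) (ha : a ∈ C) (hb : b ∈ C)
    (ha4 : orderOf a = 4) (hb4 : orderOf b = 4)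
    (hbc : b ^ 2 = c ^ 2) (hbcc : b ^ 2 = ⁅b, c⁆)
    (hab : ⁅a, b⁆ = 1) (hac : ⁅a, c⁆ = 1) :
    (a * b) ^ 2 = uG k1 k2 k3 ∧ (a * c) ^ 2 = uG k1 k2 k3 ∧
      a ^ 2 ≠ uG k1 k2 k3 ∧ b ^ 2 ≠ uG k1 k2 k3 ∧ c ^ 2 ≠ uG k1 k2 k3 := by
  subst hn
  have hab_sq : (a * b) ^ 2 = a ^ 2 * b ^ 2 :=
    (commutatorElement_eq_one_iff_commute.mp hab).mul_pow 2
  have hac_sq : (a * c) ^ 2 = a ^ 2 * c ^ 2 :=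
    (commutatorElement_eq_one_iff_commute.mp hac).mul_pow 2
  have ha2 : a ^ 2 ≠ 1 := pow_ne_one_of_lt_orderOf two_ne_zero (by omega)
  have hb2 : b ^ 2 ≠ 1 := pow_ne_one_of_lt_orderOf two_ne_zero (by omega)
  obtain ⟨hwab, hwa, hwb⟩ := wtG_eq_of_wtG_mul_eq_add (by omega) hHad (pow_mem ha 2) (pow_mem hb 2)
    ha2 hb2 (wtG_mul_of_blockDisjoint (blockDisjoint_sq_sq hbcc hab hac))
  have hu : (a * b) ^ 2 = uG k1 k2 k3 := hab_sq ▸ eq_uG_of_wtG_eq hwab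
  exact ⟨hu, by rw [hac_sq, ← hbc, ← hab_sq, hu], ne_uG_of_two_mul_wtG_eq (by omega) hwa,
    ne_uG_of_two_mul_wtG_eq (by omega) hwb, hbc ▸ ne_uG_of_two_mul_wtG_eq (by omega) hwb⟩

/-- Hadamard-code lemma: if a, b, c ∈ C have order 4, b² = c² = [b,c] and a commutes with
b and c, then (ab)² = (ac)² = u and none of a², b², c² equals u. -/
theorem stmt_18 (k1 k2 k3 : ℕ) (C : Subgroup (Gq k1 k2 k3))
    (n : ℕ) (hn : n = k1 + 2 * k2 + 4 * k3) (hn4 : 4 < n)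
    (hHad : ∀ x ∈ C, x ≠ 1 → 2 * wtG x = n ∨ wtG x = n)
    (a b c : Gq k1 k2 k3) (ha : a ∈ C) (hb : b ∈ C) (hc : c ∈ C)
    (ha4 : orderOf a = 4) (hb4 : orderOf b = 4) (hc4 : orderOf c = 4)
    (hbc : b ^ 2 = c ^ 2) (hbcc : b ^ 2 = ⁅b, c⁆)
    (hab : ⁅a, b⁆ = 1) (hac : ⁅a, c⁆ = 1) :
    (a * b) ^ 2 = uG k1 k2 k3 ∧ (a * c) ^ 2 = uG k1 k2 k3 ∧
      a ^ 2 ≠ uG k1 k2 k3 ∧ b ^ 2 ≠ uG k1 k2 k3 ∧ c ^ 2 ≠ uG k1 k2 k3 :=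
  stmt_18_general k1 k2 k3 C n hn hn4 hHad a b c ha hb ha4 hb4 hbc hbcc hab hac
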